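/- arXiv:2403.05853 — 2 statements merged into one kernel-verified Lean document; each statement's English description precedes it below -/
import Mathlib

section
/- Let Θ be a real 3×3 matrix with zero diagonal, with Θ₍ᵢ,ᵢ₋₁₎ > 0 and Θ₍ᵢ,ᵢ₊₁₎ ≤ 0 for all i (indices cyclic mod 3). If Θ₂₁Θ₃₂Θ₁₃ + Θ₁₂Θ₂₃Θ₃₁ > 0, then there exists a vector ν ∈ ℝ³ with all entries strictly positive such that Θν has all entries strictly positive. -/
lemma repelling_cycle_aux (a b c p q r : ℝ)
    (ha : 0 < a) (hb : 0 < b) (hc : 0 < c)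
    (hp : 0 ≤ p) (hq : 0 ≤ q) (hr : 0 ≤ r)
    (hK : 0 < a * b * c - p * q * r) :
    ∃ x y z : ℝ, 0 < x ∧ 0 < y ∧ 0 < z ∧
      0 < -p * y + a * z ∧ 0 < b * x + -q * z ∧ 0 < -r * x + c * y := by
  have hM : (0:ℝ) < q * (p + 1) + 1 := by nlinarith
  have haK : 0 < a * (a * b * c - p * q * r) := mul_pos ha hK
  set ε : ℝ := a * (a * b * c - p * q * r) / (2 * (q * (p + 1) + 1)) with hε
  have hε' : 0 < ε := div_pos haK (by linarith)
  have hkey : q * (p + 1) * ε < a * (a * b * c - p * q * r) := by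
    rw [hε]
    calc q * (p + 1) * (a * (a * b * c - p * q * r) / (2 * (q * (p + 1) + 1)))
        ≤ (q * (p + 1) + 1) * (a * (a * b * c - p * q * r) / (2 * (q * (p + 1) + 1))) := by
          apply mul_le_mul_of_nonneg_right (by linarith)
          exact (div_pos haK (by linarith)).le
      _ = a * (a * b * c - p * q * r) / 2 := by field_simp
      _ < a * (a * b * c - p * q * r) := by linarith
  refine ⟨a * a * c, a * a * r + a * ε, p * (a * r + ε) + ε, ?_, ?_, ?_, ?_, ?_, ?_⟩
  · exact mul_pos (mul_pos ha ha) hc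
  · nlinarith [mul_pos ha hε', mul_nonneg (mul_nonneg ha.le ha.le) hr]
  · nlinarith [mul_nonneg hp (by nlinarith [mul_nonneg ha.le hr] : (0:ℝ) ≤ a * r + ε)]
  · have h : -p * (a * a * r + a * ε) + a * (p * (a * r + ε) + ε) = a * ε := by ring
    rw [h]; exact mul_pos ha hε'
  · have h : b * (a * a * c) + -q * (p * (a * r + ε) + ε)
        = a * (a * b * c - p * q * r) - q * (p + 1) * ε := by ring
    rw [h]; linarith
  · have h : -r * (a * a * c) + c * (a * a * r + a * ε) = a * c * ε := by ring
    rw [h]; exact mul_pos (mul_pos ha hc) hε'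

/-- Repelling heteroclinic cycle criterion (linear-algebra core): if `Θ` has zero
diagonal, positive entries `Θ_{i,i-1}` and nonpositive entries `Θ_{i,i+1}` (cyclic),
and `Θ₂₁Θ₃₂Θ₁₃ + Θ₁₂Θ₂₃Θ₃₁ > 0`, then some positive vector is mapped by `Θ` to a
positive vector. -/
theorem repelling_cycle_positive_vector
    (Θ : Matrix (Fin 3) (Fin 3) ℝ)
    (hdiag : ∀ i, Θ i i = 0)
    (hpos : 0 < Θ 0 2 ∧ 0 < Θ 1 0 ∧ 0 < Θ 2 1)
    (hneg : Θ 0 1 ≤ 0 ∧ Θ 1 2 ≤ 0 ∧ Θ 2 0 ≤ 0)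
    (hdet : 0 < Θ 1 0 * Θ 2 1 * Θ 0 2 + Θ 0 1 * Θ 1 2 * Θ 2 0) :
    ∃ ν : Fin 3 → ℝ, (∀ i, 0 < ν i) ∧ ∀ i, 0 < Θ.mulVec ν i := by
  obtain ⟨ha, hb, hc⟩ := hpos
  obtain ⟨hp, hq, hr⟩ := hneg
  have hK : 0 < Θ 0 2 * Θ 1 0 * Θ 2 1 - (-Θ 0 1) * (-Θ 1 2) * (-Θ 2 0) := by nlinarith
  obtain ⟨x, y, z, hx, hy, hz, h0, h1, h2⟩ :=
    repelling_cycle_aux (Θ 0 2) (Θ 1 0) (Θ 2 1) (-Θ 0 1) (-Θ 1 2) (-Θ 2 0)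
      ha hb hc (by linarith) (by linarith) (by linarith) hK
  refine ⟨![x, y, z], ?_, ?_⟩
  · intro i; fin_cases i <;> simpa
  · intro i
    have e00 := hdiag 0
    have e11 := hdiag 1
    have e22 := hdiag 2
    have simp3 : ∀ j : Fin 3, Θ.mulVec ![x, y, z] j
        = Θ j 0 * x + Θ j 1 * y + Θ j 2 * z := by
      intro j
      simp [Matrix.mulVec, dotProduct, Fin.sum_univ_three]
    fin_cases i
    · show 0 < Θ.mulVec ![x, y, z] 0
      rw [simp3]; rw [e00]; nlinarith [h0]
    · show 0 < Θ.mulVec ![x, y, z] 1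
      rw [simp3]; rw [e11]; nlinarith [h1]
    · show 0 < Θ.mulVec ![x, y, z] 2
      rw [simp3]; rw [e22]; nlinarith [h2]
end

section
/- Let Θ be a real 3×3 matrix with zero diagonal, Θ₍ᵢ,ᵢ₋₁₎ ≥ 0 and Θ₍ᵢ,ᵢ₊₁₎ ≤ 0 for all i (indices cyclic mod 3). If Θ₂₁Θ₃₂Θ₁₃ + Θ₁₂Θ₂₃Θ₃₁ < 0, then there exists ν ∈ ℝ³ with all entries strictly positive such that Θν has all entries strictly negative. -/
/-- Attracting heteroclinic cycle criterion (linear-algebra core): if `Θ` has zero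
diagonal, nonnegative entries `Θ_{i,i-1}` and nonpositive entries `Θ_{i,i+1}` (cyclic),
and `Θ₂₁Θ₃₂Θ₁₃ + Θ₁₂Θ₂₃Θ₃₁ < 0`, then some positive vector is mapped by `Θ` to a
vector with all entries negative. -/
theorem attracting_cycle_negative_vector
    (Θ : Matrix (Fin 3) (Fin 3) ℝ)
    (hdiag : ∀ i, Θ i i = 0)
    (hpos : 0 ≤ Θ 0 2 ∧ 0 ≤ Θ 1 0 ∧ 0 ≤ Θ 2 1)
    (hneg : Θ 0 1 ≤ 0 ∧ Θ 1 2 ≤ 0 ∧ Θ 2 0 ≤ 0)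
    (hdet : Θ 1 0 * Θ 2 1 * Θ 0 2 + Θ 0 1 * Θ 1 2 * Θ 2 0 < 0) :
    ∃ ν : Fin 3 → ℝ, (∀ i, 0 < ν i) ∧ ∀ i, Θ.mulVec ν i < 0 := by
  obtain ⟨hp, hq, hr⟩ := hpos
  obtain ⟨ha', hb', hc'⟩ := hneg
  have hqrp : 0 ≤ Θ 1 0 * Θ 2 1 * Θ 0 2 := mul_nonneg (mul_nonneg hq hr) hp
  -- strict negativity of the three entries
  have hA : Θ 0 1 < 0 := by
    rcases ha'.lt_or_eq with h | h
    · exact h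
    · simp only [h, zero_mul, mul_zero, add_zero] at hdet; linarith
  have hB : Θ 1 2 < 0 := by
    rcases hb'.lt_or_eq with h | h
    · exact h
    · simp only [h, zero_mul, mul_zero, add_zero] at hdet; linarith
  have hC : Θ 2 0 < 0 := by
    rcases hc'.lt_or_eq with h | h
    · exact h
    · simp only [h, zero_mul, mul_zero, add_zero] at hdet; linarith
  obtain ⟨a, hae⟩ : ∃ a, Θ 0 1 = -a := ⟨-Θ 0 1, by ring⟩
  obtain ⟨b, hbe⟩ : ∃ b, Θ 1 2 = -b := ⟨-Θ 1 2, by ring⟩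
  obtain ⟨c, hce⟩ : ∃ c, Θ 2 0 = -c := ⟨-Θ 2 0, by ring⟩
  obtain ⟨p, hpe⟩ : ∃ p, Θ 0 2 = p := ⟨Θ 0 2, rfl⟩
  obtain ⟨q, hqe⟩ : ∃ q, Θ 1 0 = q := ⟨Θ 1 0, rfl⟩
  obtain ⟨r, hre⟩ : ∃ r, Θ 2 1 = r := ⟨Θ 2 1, rfl⟩
  rw [hae] at hA; rw [hbe] at hB; rw [hce] at hC
  rw [hpe] at hp; rw [hqe] at hq; rw [hre] at hr
  rw [hae, hbe, hce, hpe, hqe, hre] at hdet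
  have ha : 0 < a := by linarith
  have hb : 0 < b := by linarith
  have hc : 0 < c := by linarith
  have habc : p * q * r < a * b * c := by nlinarith
  have hden : 0 < r * (p + 1) + 1 := by positivity
  obtain ⟨δ, h1, hδ⟩ : ∃ δ : ℝ,
      (r * (p + 1) + 1) * δ = c * (a * b * c - p * q * r) ∧ 0 < δ := by
    refine ⟨c * (a * b * c - p * q * r) / (r * (p + 1) + 1), ?_, ?_⟩
    · field_simp
    · apply div_pos _ hden; nlinarith
  refine ⟨![b * c, (p * (q * c + δ) + δ) / a, q * c + δ], ?_, ?_⟩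
  · intro i
    have hqc : 0 ≤ p * (q * c + δ) := mul_nonneg hp (by nlinarith)
    fin_cases i
    · show (0:ℝ) < b * c; positivity
    · show (0:ℝ) < (p * (q * c + δ) + δ) / a
      apply div_pos _ ha; linarith
    · show (0:ℝ) < q * c + δ; nlinarith
  · have hm : ∀ i, Θ.mulVec ![b * c, (p * (q * c + δ) + δ) / a, q * c + δ] i =
        Θ i 0 * (b * c) + Θ i 1 * ((p * (q * c + δ) + δ) / a)
          + Θ i 2 * (q * c + δ) := by
      intro i
      simp [Matrix.mulVec, dotProduct, Fin.sum_univ_three]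
    have g0 : Θ.mulVec ![b * c, (p * (q * c + δ) + δ) / a, q * c + δ] 0 < 0 := by
      rw [hm 0, hdiag 0, hae, hpe]
      have e : -a * ((p * (q * c + δ) + δ) / a) = -(p * (q * c + δ) + δ) := by
        field_simp
      rw [e]; nlinarith
    have g1 : Θ.mulVec ![b * c, (p * (q * c + δ) + δ) / a, q * c + δ] 1 < 0 := by
      rw [hm 1, hdiag 1, hbe, hqe]
      nlinarith
    have g2 : Θ.mulVec ![b * c, (p * (q * c + δ) + δ) / a, q * c + δ] 2 < 0 := by
      rw [hm 2, hdiag 2, hce, hre]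
      have h2 : r * ((p * (q * c + δ) + δ) / a) < b * c * c := by
        have e : r * ((p * (q * c + δ) + δ) / a) = r * (p * (q * c + δ) + δ) / a := by
          ring
        rw [e, div_lt_iff₀ ha]
        nlinarith [h1, hδ]
      nlinarith
    intro i
    fin_cases i
    · exact g0
    · exact g1
    · exact g2
end
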